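/- arXiv:1507.01160 — 4 statements merged into one kernel-verified Lean document; each statement's English description precedes it below -/
import Mathlib

section
/- For a standard normal random variable z and any w ≥ 0, P(z ≥ w) ≤ 2·exp(−w²/2) / (√(2π)·(w + √(w² + 8/π))). -/
/-!
Write `F(w) = 2 / (w + √(w² + 8/π)) = (π/4)(√(w² + 8/π) - w)` for the claimed bound on the Mills
ratio `e^{w²/2} ∫_w^∞ e^{-x²/2} dx`. The gap
`G(w) = e^{-w²/2} F(w) - ∫_w^∞ e^{-x²/2} dx` vanishes at `0` (both terms equal `√(π/2)`) and
tends to `0` at infinity, and `G'(w) = e^{-w²/2} (F'(w) - w F(w) + 1)`. The bracket has the sign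
of `(4/π - 1)² - w² (1 - 2/π)`, so on `[0, ∞)` the gap first increases and then decreases; hence
it is nonnegative there.
-/

open Real MeasureTheory Set Filter Topology

theorem nonneg_of_deriv_nonneg_of_nonpos_of_tendsto_zero {G G' : ℝ → ℝ} {a c x : ℝ}
    (hG : ∀ y, HasDerivAt G (G' y) y) (hGa : 0 ≤ G a) (hG_top : Tendsto G atTop (𝓝 0))
    (h_inc : ∀ y ∈ Ioo a c, 0 ≤ G' y) (h_dec : ∀ y ∈ Ioi c, G' y ≤ 0) (hx : a ≤ x) :
    0 ≤ G x := by
  have hcont : Continuous G := continuous_iff_continuousAt.2 fun y ↦ (hG y).continuousAt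
  rcases le_or_gt x c with hxc | hcx
  · have hmono : MonotoneOn G (Icc a c) :=
      monotoneOn_of_hasDerivWithinAt_nonneg (convex_Icc a c) hcont.continuousOn
        (fun y _ ↦ (hG y).hasDerivWithinAt) (by simpa only [interior_Icc] using h_inc)
    exact hGa.trans (hmono ⟨le_rfl, hx.trans hxc⟩ ⟨hx, hxc⟩ hx)
  · have hanti : AntitoneOn G (Ici c) :=
      antitoneOn_of_hasDerivWithinAt_nonpos (convex_Ici c) hcont.continuousOn
        (fun y _ ↦ (hG y).hasDerivWithinAt) (by simpa only [interior_Ici] using h_dec)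
    refine le_of_tendsto hG_top ?_
    filter_upwards [eventually_ge_atTop x] with y hy
    exact hanti hcx.le (hcx.le.trans hy) hy

theorem hasDerivAt_integral_Ici {f : ℝ → ℝ} (hf : Integrable f) (hf_cont : Continuous f) (w : ℝ) :
    HasDerivAt (fun w ↦ ∫ x in Ici w, f x) (-f w) w := by
  have htail : (fun w ↦ ∫ x in Ici w, f x) = fun w ↦ (∫ x in Ici 0, f x) - ∫ x in 0..w, f x := by
    ext w
    rw [← intervalIntegral.integral_Ici_sub_Ici' hf.integrableOn hf.integrableOn, sub_sub_cancel]
  rw [htail]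
  exact (intervalIntegral.integral_hasDerivAt_right (hf_cont.intervalIntegrable _ _)
    hf_cont.aestronglyMeasurable.stronglyMeasurableAtFilter hf_cont.continuousAt).const_sub _

noncomputable def millsRatioBound (w : ℝ) : ℝ := π / 4 * (√(w ^ 2 + 8 / π) - w)

theorem add_sqrt_sq_add_pos {a : ℝ} (ha : 0 < a) (w : ℝ) : 0 < w + √(w ^ 2 + a) := by
  have : |w| < √(w ^ 2 + a) := by rw [lt_sqrt (abs_nonneg w), sq_abs]; linarith
  linarith [neg_abs_le w]

theorem millsRatioBound_eq_div (w : ℝ) : millsRatioBound w = 2 / (w + √(w ^ 2 + 8 / π)) := by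
  have hs : √(w ^ 2 + 8 / π) ^ 2 = w ^ 2 + 8 / π := sq_sqrt (by positivity)
  have hπ : π * π⁻¹ = 1 := mul_inv_cancel₀ pi_ne_zero
  rw [eq_div_iff (add_sqrt_sq_add_pos (by positivity) w).ne', millsRatioBound]
  linear_combination π / 4 * hs + 2 * hπ

theorem millsRatioBound_zero : millsRatioBound 0 = √(2 * π) / 2 := by
  have h : (0 : ℝ) ^ 2 + 8 / π = (2 / π) ^ 2 * (2 * π) := by field_simp; ring
  rw [millsRatioBound, h, sqrt_mul (sq_nonneg _), sqrt_sq (by positivity)]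
  field_simp
  ring

theorem tendsto_millsRatioBound_atTop : Tendsto millsRatioBound atTop (𝓝 0) := by
  rw [funext millsRatioBound_eq_div]
  exact tendsto_const_nhds.div_atTop
    (tendsto_atTop_add_right_of_le _ 0 tendsto_id fun w ↦ sqrt_nonneg _)

theorem hasDerivAt_millsRatioBound (w : ℝ) :
    HasDerivAt millsRatioBound (π / 4 * (w / √(w ^ 2 + 8 / π) - 1)) w := by
  have h := (((hasDerivAt_pow 2 w).add_const (8 / π)).sqrt (by positivity)).sub (hasDerivAt_id w)
  refine (h.const_mul (π / 4)).congr_deriv ?_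
  norm_num
  ring

theorem millsRatioBound_ode_nonneg_iff {w : ℝ} (hw : 0 ≤ w) :
    0 ≤ π / 4 * (w / √(w ^ 2 + 8 / π) - 1) - w * millsRatioBound w + 1 ↔
      w ^ 2 * (1 - 2 / π) ≤ (4 / π - 1) ^ 2 := by
  set s := √(w ^ 2 + 8 / π)
  have hs2 : s ^ 2 = w ^ 2 + 8 / π := sq_sqrt (by positivity)
  have hs : 0 < s := by positivity
  have hπ : π * π⁻¹ = 1 := mul_inv_cancel₀ pi_ne_zero
  have h4 : 0 < 4 / π - 1 := by rw [sub_pos, one_lt_div pi_pos]; linarith [pi_lt_four]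
  have h8 : 0 < 8 / π - 1 := by rw [sub_pos, one_lt_div pi_pos]; linarith [pi_lt_four]
  set A := s * (w ^ 2 + (4 / π - 1))
  set B := w * (w ^ 2 + (8 / π - 1))
  have hAB : 0 < s * (A + B) := by positivity
  have hφ : (π / 4 * (w / s - 1) - w * millsRatioBound w + 1) * s = π / 4 * (A - B) := by
    unfold millsRatioBound
    linear_combination (π / 4) * div_mul_cancel₀ w hs.ne' - (π / 4 * w) * hs2 - s * hπ
  have hsq : (A - B) * (A + B) = 8 / π * ((4 / π - 1) ^ 2 - w ^ 2 * (1 - 2 / π)) := by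
    linear_combination (w ^ 2 + (4 / π - 1)) ^ 2 * hs2
  have key : (π / 4 * (w / s - 1) - w * millsRatioBound w + 1) * (s * (A + B)) =
      2 * ((4 / π - 1) ^ 2 - w ^ 2 * (1 - 2 / π)) := by
    linear_combination (A + B) * hφ + π / 4 * hsq + 2 * ((4 / π - 1) ^ 2 - w ^ 2 * (1 - 2 / π)) * hπ
  rw [← mul_nonneg_iff_of_pos_right hAB, key]
  constructor <;> intro h <;> linarith

theorem integrable_exp_neg_sq_div_two : Integrable fun x : ℝ ↦ exp (-x ^ 2 / 2) := by
  convert integrable_exp_neg_mul_sq (by norm_num : (0 : ℝ) < 1 / 2) using 3 with x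
  ring

theorem integral_Ici_zero_exp_neg_sq_div_two :
    ∫ x in Ici 0, exp (-x ^ 2 / 2) = √(2 * π) / 2 := by
  rw [integral_Ici_eq_integral_Ioi, show 2 * π = π / (1 / 2) by ring, ← integral_gaussian_Ioi]
  congr with x
  ring_nf

theorem integral_Ici_exp_neg_sq_div_two_le {w : ℝ} (hw : 0 ≤ w) :
    ∫ x in Ici w, exp (-x ^ 2 / 2) ≤ exp (-w ^ 2 / 2) * millsRatioBound w := by
  set c := √((4 / π - 1) ^ 2 / (1 - 2 / π))
  have hπ : 0 < 1 - 2 / π := by rw [sub_pos, div_lt_one pi_pos]; linarith [pi_gt_three]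
  have hgauss (y : ℝ) : HasDerivAt (fun y : ℝ ↦ exp (-y ^ 2 / 2)) (exp (-y ^ 2 / 2) * -y) y := by
    refine ((hasDerivAt_pow 2 y).neg.div_const 2).exp.congr_deriv ?_
    norm_num
    ring
  have hG (y : ℝ) : HasDerivAt
      (fun y ↦ exp (-y ^ 2 / 2) * millsRatioBound y - ∫ x in Ici y, exp (-x ^ 2 / 2))
      (exp (-y ^ 2 / 2) * (π / 4 * (y / √(y ^ 2 + 8 / π) - 1) - y * millsRatioBound y + 1)) y := by
    refine (((hgauss y).mul (hasDerivAt_millsRatioBound y)).sub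
      (hasDerivAt_integral_Ici integrable_exp_neg_sq_div_two (by fun_prop) y)).congr_deriv ?_
    ring
  have h0 : 0 ≤ exp (-0 ^ 2 / 2) * millsRatioBound 0 - ∫ x in Ici 0, exp (-x ^ 2 / 2) := by
    simp [millsRatioBound_zero, integral_Ici_zero_exp_neg_sq_div_two]
  have htop : Tendsto (fun y ↦ exp (-y ^ 2 / 2) * millsRatioBound y - ∫ x in Ici y, exp (-x ^ 2 / 2))
      atTop (𝓝 0) := by
    have hgauss_top : Tendsto (fun y : ℝ ↦ exp (-y ^ 2 / 2)) atTop (𝓝 0) :=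
      tendsto_exp_atBot.comp
        ((tendsto_neg_atTop_atBot.comp (tendsto_pow_atTop two_ne_zero)).atBot_div_const two_pos)
    simpa using (hgauss_top.mul tendsto_millsRatioBound_atTop).sub
      (tendsto_integral_Ici_zero (f := fun x ↦ exp (-x ^ 2 / 2)) (μ := volume) tendsto_id)
  have hinc : ∀ y ∈ Ioo 0 c,
      0 ≤ exp (-y ^ 2 / 2) * (π / 4 * (y / √(y ^ 2 + 8 / π) - 1) - y * millsRatioBound y + 1) := by
    intro y hy
    refine mul_nonneg (exp_nonneg _) ((millsRatioBound_ode_nonneg_iff hy.1.le).2 ?_)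
    rw [← le_div_iff₀ hπ, ← le_sqrt hy.1.le (by positivity)]
    exact hy.2.le
  have hdec : ∀ y ∈ Ioi c,
      exp (-y ^ 2 / 2) * (π / 4 * (y / √(y ^ 2 + 8 / π) - 1) - y * millsRatioBound y + 1) ≤ 0 := by
    intro y hy
    have hy0 : 0 < y := (sqrt_nonneg _).trans_lt hy
    refine mul_nonpos_of_nonneg_of_nonpos (exp_nonneg _) (le_of_lt (not_le.1 ?_))
    rw [millsRatioBound_ode_nonneg_iff hy0.le, not_le, ← div_lt_iff₀ hπ, ← sqrt_lt' hy0]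
    exact hy
  have hgap := nonneg_of_deriv_nonneg_of_nonpos_of_tendsto_zero hG h0 htop hinc hdec hw
  exact sub_nonneg.1 hgap

/-- Sharper upper Gaussian tail bound: for standard normal `z` and `w ≥ 0`,
`P(z ≥ w) ≤ 2 exp(-w²/2) / (√(2π) (w + √(w² + 8/π)))`. -/
theorem gaussian_tail_upper_sharp (w : ℝ) (hw : 0 ≤ w) :
    ∫ x in Set.Ici w, Real.exp (-x ^ 2 / 2) / Real.sqrt (2 * π) ≤
      2 * Real.exp (-w ^ 2 / 2) /
        (Real.sqrt (2 * π) * (w + Real.sqrt (w ^ 2 + 8 / π))) :=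
  calc ∫ x in Ici w, exp (-x ^ 2 / 2) / √(2 * π)
      = (∫ x in Ici w, exp (-x ^ 2 / 2)) / √(2 * π) := integral_div _ _
    _ ≤ exp (-w ^ 2 / 2) * millsRatioBound w / √(2 * π) := by
      gcongr
      exact integral_Ici_exp_neg_sq_div_two_le hw
    _ = 2 * exp (-w ^ 2 / 2) / (√(2 * π) * (w + √(w ^ 2 + 8 / π))) := by
      rw [millsRatioBound_eq_div, mul_div_assoc', div_div]
      ring
end

section
/- For every natural number t ≥ 1 and real a > 1, the standard Gaussian quantile satisfies Φ⁻¹(1 − 1/(√(2πe)·t^a)) > √((3a/2)·log t). -/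
/-!
With `s = √((3a/2) log t)` the level `α = 1/(√(2πe) t^a)` equals `e^{-1/2 - 2s²/3}/√(2π)`,
so it suffices to bound the Gaussian tail from below: `∫_s^∞ φ > e^{-1/2 - 2s²/3}/√(2π)`.
This holds because `φ(x) = e^{-1/2 - 2x²/3} e^{x²/6 + 1/2}/√(2π)` dominates
`(4x/3) e^{-1/2 - 2x²/3}/√(2π)` (as `e^{x²/6 + 1/2} > 4x/3`), and the latter integrates
over `(s, ∞)` to exactly that bound. Then `Φ s < 1 - α = Φ (Φ⁻¹ (1 - α))`, and monotonicity
of `Φ` gives `s < Φ⁻¹ (1 - α)`.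
-/

open Real MeasureTheory Set Filter

theorem integral_Ioi_mul_exp_neg_mul_sq {b : ℝ} (hb : 0 < b) (s : ℝ) :
    ∫ x in Ioi s, x * exp (-b * x ^ 2) = exp (-b * s ^ 2) / (2 * b) := by
  have hderiv (x : ℝ) :
      HasDerivAt (fun y ↦ -exp (-b * y ^ 2) / (2 * b)) (x * exp (-b * x ^ 2)) x :=
    (((hasDerivAt_pow 2 x).const_mul (-b)).exp.neg.div_const (2 * b)).congr_deriv
      (by field_simp; ring)
  have hlim : Tendsto (fun y ↦ -exp (-b * y ^ 2) / (2 * b)) atTop (nhds 0) := by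
    simpa using ((tendsto_exp_atBot.comp <|
      (tendsto_pow_atTop two_ne_zero).const_mul_atTop_of_neg (neg_neg_of_pos hb))).neg.div_const
        (2 * b)
  rw [integral_Ioi_of_hasDerivAt_of_tendsto' (fun x _ ↦ hderiv x)
    (integrable_mul_exp_neg_mul_sq hb).integrableOn hlim]
  ring

theorem setIntegral_lt_setIntegral_of_forall_lt {X : Type*} [MeasurableSpace X] {μ : Measure X}
    {f g : X → ℝ} {s : Set X} (hs : MeasurableSet s) (hμs : μ s ≠ 0)
    (hf : IntegrableOn f s μ) (hg : IntegrableOn g s μ) (hfg : ∀ x ∈ s, f x < g x) :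
    ∫ x in s, f x ∂μ < ∫ x in s, g x ∂μ := by
  have hpos : ∀ x ∈ s, 0 < (g - f) x := fun x hx ↦ sub_pos.2 (hfg x hx)
  have := (setIntegral_pos_iff_support_of_nonneg_ae
    (ae_restrict_of_forall_mem hs fun x hx ↦ (hpos x hx).le) (hg.sub hf)).2
    (by rwa [inter_eq_right.2 fun x hx ↦ Function.mem_support.2 (hpos x hx).ne', pos_iff_ne_zero])
  simp only [Pi.sub_apply] at this
  rw [integral_sub hg hf] at this
  linarith

theorem four_thirds_mul_lt_exp (x : ℝ) : 4 / 3 * x < exp (x ^ 2 / 6 + 1 / 2) := by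
  have := quadratic_le_exp_of_nonneg (x := x ^ 2 / 6 + 1 / 2) (by positivity)
  nlinarith [sq_nonneg (x - 2), sq_nonneg (x ^ 2 - 4)]

namespace ProbabilityTheory

theorem gaussianPDFReal_zero_one (x : ℝ) :
    gaussianPDFReal 0 1 x = exp (-x ^ 2 / 2) / √(2 * π) := by
  simp [gaussianPDFReal, div_eq_inv_mul]

theorem exp_neg_half_sub_lt_integral_Ioi_gaussianPDFReal (s : ℝ) :
    exp (-1 / 2 - 2 * s ^ 2 / 3) / √(2 * π) < ∫ x in Ioi s, gaussianPDFReal 0 1 x := by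
  set c := 4 / 3 * exp (-1 / 2) / √(2 * π)
  have hdom (x : ℝ) : c * (x * exp (-(2 / 3) * x ^ 2)) < gaussianPDFReal 0 1 x := by
    have hsplit : exp (-x ^ 2 / 2) = exp (-1 / 2 - 2 * x ^ 2 / 3) * exp (x ^ 2 / 6 + 1 / 2) := by
      rw [← exp_add]; ring_nf
    have hlhs : c * (x * exp (-(2 / 3) * x ^ 2))
        = exp (-1 / 2 - 2 * x ^ 2 / 3) * (4 / 3 * x) / √(2 * π) := by
      simp only [c]; rw [sub_eq_add_neg, exp_add]; ring_nf
    rw [gaussianPDFReal_zero_one, hsplit, hlhs]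
    gcongr
    exact four_thirds_mul_lt_exp x
  calc exp (-1 / 2 - 2 * s ^ 2 / 3) / √(2 * π)
      = ∫ x in Ioi s, c * (x * exp (-(2 / 3) * x ^ 2)) := by
        rw [integral_const_mul, integral_Ioi_mul_exp_neg_mul_sq (by norm_num), sub_eq_add_neg,
          exp_add]
        simp only [c]; ring_nf
    _ < ∫ x in Ioi s, gaussianPDFReal 0 1 x :=
        setIntegral_lt_setIntegral_of_forall_lt measurableSet_Ioi (by simp)
          ((integrable_mul_exp_neg_mul_sq (by norm_num)).const_mul c).integrableOn
          (integrable_gaussianPDFReal 0 1).integrableOn fun x _ ↦ hdom x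

end ProbabilityTheory

open ProbabilityTheory

theorem one_div_sqrt_two_pi_exp_one_mul_rpow {t : ℝ} (ht : 0 < t) (a : ℝ) :
    1 / (√(2 * π * exp 1) * t ^ a) = exp (-1 / 2 - a * log t) / √(2 * π) := by
  have hsqrt_exp : √(exp 1) = exp (1 / 2) := by
    rw [sqrt_eq_iff_eq_sq (exp_pos 1).le (exp_pos _).le, ← exp_nat_mul]; norm_num
  rw [sqrt_mul (by positivity), hsqrt_exp, rpow_def_of_pos ht,
    show -1 / 2 - a * log t = -(1 / 2 + log t * a) by ring, exp_neg, exp_add]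
  field_simp

/-- Third quantile inequality: for `t ≥ 1` natural and `a > 1`,
`Φ⁻¹(1 - 1/(√(2πe) t^a)) > √((3a/2) log t)`. -/
theorem gaussian_quantile_log_bound
    (Φ Φinv : ℝ → ℝ)
    (hΦ : ∀ w, Φ w = ∫ x in Set.Iic w, Real.exp (-x ^ 2 / 2) / Real.sqrt (2 * π))
    (hinv : ∀ p ∈ Set.Ioo (0 : ℝ) 1, Φ (Φinv p) = p)
    (t : ℕ) (ht : 1 ≤ t) (a : ℝ) (ha : 1 < a) :
    Φinv (1 - 1 / (Real.sqrt (2 * π * Real.exp 1) * (t : ℝ) ^ a)) >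
      Real.sqrt ((3 * a / 2) * Real.log t) := by
  simp_rw [← gaussianPDFReal_zero_one] at hΦ
  have hint (S : Set ℝ) : IntegrableOn (gaussianPDFReal 0 1) S :=
    (integrable_gaussianPDFReal 0 1).integrableOn
  have hΦ_mono : Monotone Φ := fun v w hvw ↦ by
    rw [hΦ, hΦ]
    exact setIntegral_mono_set (hint _) (ae_of_all _ (gaussianPDFReal_nonneg 0 1))
      (Iic_subset_Iic.2 hvw).eventuallyLE
  have hΦ_add_tail (w : ℝ) : Φ w + ∫ x in Ioi w, gaussianPDFReal 0 1 x = 1 := by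
    rw [hΦ, intervalIntegral.integral_Iic_add_Ioi (hint _) (hint _),
      integral_gaussianPDFReal_eq_one 0 one_ne_zero]
  set s := √((3 * a / 2) * log t)
  set α := 1 / (√(2 * π * exp 1) * (t : ℝ) ^ a) with hα_def
  have ht₀ : (0 : ℝ) < t := by exact_mod_cast ht
  have hα_pos : 0 < α := by positivity
  have hα : α = exp (-1 / 2 - 2 * s ^ 2 / 3) / √(2 * π) := by
    have hlog : 0 ≤ log t := log_nonneg (by exact_mod_cast ht)
    rw [hα_def, one_div_sqrt_two_pi_exp_one_mul_rpow ht₀,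
      sq_sqrt (mul_nonneg (by linarith) hlog)]
    ring_nf
  have hΦs : Φ s < 1 - α := by
    linarith [hΦ_add_tail s, exp_neg_half_sub_lt_integral_Ioi_gaussianPDFReal s]
  have hΦs_nonneg : 0 ≤ Φ s := hΦ s ▸ setIntegral_nonneg measurableSet_Iic
    fun x _ ↦ gaussianPDFReal_nonneg 0 1 x
  by_contra! h
  linarith [hinv (1 - α) ⟨by linarith, by linarith⟩ ▸ hΦ_mono h]
end

section
/- Posterior variance sandwich in correlated inference: under the inference Λ(t) = Λ₀ + P(t)⁻¹ with Σ(t) = Λ(t)⁻¹, where Λ₀ = Σ₀⁻¹ is positive definite and P(t)⁻¹ is the diagonal matrix with entries n_i(t)/σ_s², the i-th diagonal entry of Σ(t) satisfies σ_i²(t) ≥ σ_s²/(δ_{i-cond}² + n_i(t)), where δ_{i-cond}² = σ_s²/σ_{i-cond}² and σ_{i-cond}² = σ_i²(0) − σ_i(0)Σ_{∼i}(0)⁻¹σ_i(0)ᵀ is the conditional variance of arm i given all other arms. -/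
/-! The Schur complement formula gives `(Σ₀⁻¹)ᵢᵢ = 1 / σ²_{i-cond}`. For any positive definite `Λ`
the same formula, together with the nonnegativity of the subtracted quadratic form, gives
`(Λ⁻¹)ᵢᵢ ≥ 1 / Λᵢᵢ`. Applied to `Λ = Σ₀⁻¹ + diag(nⱼ / σ_s²)`, whose `i`-th diagonal entry is
`1 / σ²_{i-cond} + nᵢ / σ_s²`, this is the bound. -/

open Matrix

namespace Matrix

variable {m K : Type*} [Fintype m] [DecidableEq m]

lemma mulVec_apply_eq_add_dotProduct_subtype_ne [CommSemiring K] (A : Matrix m m K) (y : m → K)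
    (i j : m) :
    (A *ᵥ y) j = A j i * y i + (fun a : {k // k ≠ i} => A j a.1) ⬝ᵥ (fun a => y a.1) :=
  Fintype.sum_eq_add_sum_subtype_ne _ i

lemma inv_apply_self_mul_schur_eq_one [Field K] {A : Matrix m m K} (hA : IsUnit A.det) (i : m)
    (hsub : IsUnit (of fun a b : {k // k ≠ i} => A a.1 b.1).det) :
    A⁻¹ i i * (A i i - (fun a : {k // k ≠ i} => A i a.1) ⬝ᵥ
      (of fun a b : {k // k ≠ i} => A a.1 b.1)⁻¹ *ᵥ (fun a => A a.1 i)) = 1 := by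
  set S := of fun a b : {k // k ≠ i} => A a.1 b.1
  set y : m → K := A⁻¹ *ᵥ Pi.single i 1
  have hAy : A *ᵥ y = Pi.single i 1 := by
    rw [mulVec_mulVec, mul_nonsing_inv A hA, one_mulVec]
  have hSy : S *ᵥ (fun a => y a.1) = -y i • fun a => A a.1 i := by
    funext a
    have h := congrFun hAy a
    rw [mulVec_apply_eq_add_dotProduct_subtype_ne A y i, Pi.single_eq_of_ne a.2] at h
    change (fun b : {k // k ≠ i} => A a.1 b.1) ⬝ᵥ _ = -y i * A a.1 i
    linear_combination h
  have hy : (fun a => y a.1) = -y i • (S⁻¹ *ᵥ fun a => A a.1 i) := by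
    rw [← mulVec_smul, ← hSy, mulVec_mulVec, nonsing_inv_mul S hsub, one_mulVec]
  have hrow := congrFun hAy i
  rw [mulVec_apply_eq_add_dotProduct_subtype_ne A y i, Pi.single_eq_same, hy,
    dotProduct_smul, smul_eq_mul] at hrow
  have hyi : y i = A⁻¹ i i := by simp [y, mulVec_single]
  rw [← hyi]
  linear_combination hrow

lemma PosDef.inv_apply_self_mul_schur_eq_one {A : Matrix m m ℝ} (hA : A.PosDef) (i : m) :
    A⁻¹ i i * (A i i - (fun a : {k // k ≠ i} => A i a.1) ⬝ᵥ
      (of fun a b : {k // k ≠ i} => A a.1 b.1)⁻¹ *ᵥ (fun a => A i a.1)) = 1 := by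
  have hcol : (fun a : {k // k ≠ i} => A a.1 i) = fun a => A i a.1 :=
    funext fun a => by simpa using hA.isHermitian.apply i a.1
  simpa only [hcol] using Matrix.inv_apply_self_mul_schur_eq_one hA.det_pos.ne'.isUnit i
    (hA.submatrix Subtype.val_injective).det_pos.ne'.isUnit

lemma PosDef.inv_diag_le_inv_apply {A : Matrix m m ℝ} (hA : A.PosDef) (i : m) :
    (A i i)⁻¹ ≤ A⁻¹ i i := by
  have hS : (of fun a b : {k // k ≠ i} => A a.1 b.1).PosDef := hA.submatrix Subtype.val_injective
  have hquad : 0 ≤ (fun a : {k // k ≠ i} => A i a.1) ⬝ᵥ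
      (of fun a b : {k // k ≠ i} => A a.1 b.1)⁻¹ *ᵥ (fun a => A i a.1) := by
    simpa using hS.inv.posSemidef.dotProduct_mulVec_nonneg fun a => A i a.1
  rw [inv_le_comm₀ hA.diag_pos hA.inv.diag_pos,
    ← eq_inv_of_mul_eq_one_right (hA.inv_apply_self_mul_schur_eq_one i)]
  linarith

end Matrix

/-- Posterior variance lower bound in correlated inference: with `Λ₀ = Σ₀⁻¹` positive
definite and `P⁻¹ = diag(n_j/σ_s²)`, the `i`-th diagonal entry of `Σ(t) = (Λ₀ + P⁻¹)⁻¹`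
satisfies `σ_i²(t) ≥ σ_s²/(δ_{i-cond}² + n_i)`, where `δ_{i-cond}² = σ_s²/σ_{i-cond}²`
and `σ_{i-cond}²` is the Schur complement (conditional variance of arm `i` given the rest). -/
theorem posterior_variance_lower_bound
    {N : ℕ} (S₀ : Matrix (Fin N) (Fin N) ℝ) (hS₀ : S₀.PosDef)
    (σs : ℝ) (hσs : 0 < σs) (n : Fin N → ℕ) (i : Fin N) :
    let Ssub : Matrix {j : Fin N // j ≠ i} {j : Fin N // j ≠ i} ℝ :=
      Matrix.of fun a b => S₀ a.1 b.1
    let svec : {j : Fin N // j ≠ i} → ℝ := fun a => S₀ i a.1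
    let σcond2 : ℝ := S₀ i i - svec ⬝ᵥ Ssub⁻¹.mulVec svec
    ((S₀⁻¹ + Matrix.diagonal (fun j => (n j : ℝ) / σs ^ 2))⁻¹) i i ≥
      σs ^ 2 / (σs ^ 2 / σcond2 + n i) := by
  intro Ssub svec σcond2
  have hcond : σcond2 = (S₀⁻¹ i i)⁻¹ :=
    eq_inv_of_mul_eq_one_right (hS₀.inv_apply_self_mul_schur_eq_one i)
  set Λ := S₀⁻¹ + diagonal fun j => (n j : ℝ) / σs ^ 2
  have hΛ : Λ.PosDef :=
    hS₀.inv.add_posSemidef (posSemidef_diagonal_iff.mpr fun j => by positivity)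
  have hΛii : Λ i i = S₀⁻¹ i i + n i / σs ^ 2 := by simp [Λ]
  calc σs ^ 2 / (σs ^ 2 / σcond2 + n i) = (Λ i i)⁻¹ := by
        rw [hΛii, hcond]
        field_simp
    _ ≤ Λ⁻¹ i i := hΛ.inv_diag_le_inv_apply i
end

section
/- Upper bound on estimator covariance diagonal: let Σ(t) be symmetric positive semidefinite with diagonal entries σ_i²(t) > 0, let P(t)⁻¹ be diagonal with entries n_j(t)/σ_s² where each σ_j²(t) ≤ σ_s²/(n_j(t) + ν) for some ν > 0, and let Σ̄(t) = Σ(t)P(t)⁻¹Σ(t). Then the i-th diagonal entry of Σ̄(t) satisfies σ̄_i²(t) ≤ σ_i²(t)·Σ_{j=1}^N ρ_{ij}²(t), where ρ_{ij}(t) = σ_{ij}(t)/(σ_i(t)σ_j(t)). -/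
open Matrix

/-!
Since `S` is symmetric, `(S P⁻¹ S) i i = ∑ j, S i j ² · n_j / σ_s²`, while the right-hand side is
`∑ j, S i j ² / S j j`. The variance bound `S j j ≤ σ_s² / (n_j + ν)` with `ν > 0` gives
`n_j S j j ≤ σ_s²`, i.e. `n_j / σ_s² ≤ 1 / S j j`, so the inequality holds term by term.
-/

theorem Matrix.IsSymm.mul_diagonal_mul_self_apply {n α : Type*} [Fintype n] [DecidableEq n]
    [CommSemiring α] {A : Matrix n n α} (hA : A.IsSymm) (d : n → α) (i : n) :
    (A * diagonal d * A) i i = ∑ j, A i j ^ 2 * d j := by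
  rw [mul_apply]
  exact Finset.sum_congr rfl fun j _ => by rw [mul_diagonal, hA.apply]; ring

theorem mul_div_sqrt_mul_sqrt_sq {a b : ℝ} (ha : 0 < a) (hb : 0 ≤ b) (x : ℝ) :
    a * (x / (√a * √b)) ^ 2 = x ^ 2 / b := by
  rw [div_pow, mul_pow, Real.sq_sqrt ha.le, Real.sq_sqrt hb]
  field_simp

theorem div_le_inv_of_le_div_add {n ν c s : ℝ} (hn : 0 ≤ n) (hν : 0 ≤ ν) (hs : 0 < s)
    (h : s ≤ c / (n + ν)) : n / c ≤ s⁻¹ := by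
  have hnν : 0 < n + ν := by
    rcases (add_nonneg hn hν).lt_or_eq with hpos | hzero
    · exact hpos
    · rw [← hzero, div_zero] at h
      exact absurd h hs.not_ge
  have hsc : s * (n + ν) ≤ c := (le_div_iff₀ hnν).1 h
  have hc : 0 < c := (mul_pos hs hnν).trans_le hsc
  rw [div_le_iff₀ hc, ← div_eq_inv_mul, le_div_iff₀ hs]
  nlinarith [mul_nonneg hs.le hν]

theorem estimator_covariance_upper_bound_general
    {N : ℕ} (S : Matrix (Fin N) (Fin N) ℝ) (hS : S.PosSemidef)
    (hdiag : ∀ i, 0 < S i i)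
    (σs ν : ℝ) (hν : 0 < ν)
    (n : Fin N → ℕ) (hvar : ∀ j, S j j ≤ σs ^ 2 / ((n j : ℝ) + ν)) (i : Fin N) :
    (S * Matrix.diagonal (fun j => (n j : ℝ) / σs ^ 2) * S) i i ≤
      S i i * ∑ j, (S i j / (Real.sqrt (S i i) * Real.sqrt (S j j))) ^ 2 := by
  have hsymm : S.IsSymm := isHermitian_iff_isSymm.1 hS.isHermitian
  rw [hsymm.mul_diagonal_mul_self_apply, Finset.mul_sum]
  refine Finset.sum_le_sum fun j _ => ?_
  rw [mul_div_sqrt_mul_sqrt_sq (hdiag i) (hdiag j).le, div_eq_mul_inv]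
  exact mul_le_mul_of_nonneg_left
    (div_le_inv_of_le_div_add (Nat.cast_nonneg _) hν.le (hdiag j) (hvar j)) (sq_nonneg _)

/-- Upper bound on estimator covariance diagonal (Lemma 4(ii), upper bound): with `S` PSD,
positive diagonal, `S j j ≤ σ_s²/(n j + ν)`, and `S̄ = S P⁻¹ S` with `P⁻¹ = diag(n_j/σ_s²)`,
the diagonal satisfies `S̄ i i ≤ S i i · Σ_j ρ_{ij}²` where `ρ_{ij} = S i j/(√(S i i)√(S j j))`. -/
theorem estimator_covariance_upper_bound
    {N : ℕ} (S : Matrix (Fin N) (Fin N) ℝ) (hS : S.PosSemidef)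
    (hdiag : ∀ i, 0 < S i i)
    (σs ν : ℝ) (hσs : 0 < σs) (hν : 0 < ν)
    (n : Fin N → ℕ) (hvar : ∀ j, S j j ≤ σs ^ 2 / ((n j : ℝ) + ν)) (i : Fin N) :
    (S * Matrix.diagonal (fun j => (n j : ℝ) / σs ^ 2) * S) i i ≤
      S i i * ∑ j, (S i j / (Real.sqrt (S i i) * Real.sqrt (S j j))) ^ 2 :=
  estimator_covariance_upper_bound_general S hS hdiag σs ν hν n hvar i
end
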